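/- arXiv:2004.02466 — 2 statements merged into one kernel-verified Lean document; each statement's English description precedes it below -/
import Mathlib

section
/- Let T be a positive random variable and X a random variable such that E[T^{-2} | X] and E[T^{-1} | X] are a.s. finite with E[T^{-2} | X] > 0 a.s. Then for any measurable function g(X), the relative-error risk E[((T − g(X))/T)² | X] is a.s. minimized over the value g(X) by g(X) = E[T^{-1}|X] / E[T^{-2}|X]; i.e., for every measurable g, E[((T − μ(X))/T)²] ≤ E[((T − g(X))/T)²] where μ(x) = E[T^{-1}|X=x]/E[T^{-2}|X=x]. -/
open MeasureTheory ProbabilityTheory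

/-!
For a predictor `φ` measurable with respect to the conditioning σ-algebra, the relative error
expands as `((T - φ) / T)² = 1 - 2 φ T⁻¹ + φ² T⁻²`, so pulling `φ` out of the conditional
expectation gives the conditional risk `1 - 2 φ E[T⁻¹|X] + φ² E[T⁻²|X]`, a quadratic in `φ`
minimised pointwise at `μ = E[T⁻¹|X] / E[T⁻²|X]`. Integrability is only available where the
predictors are bounded, so the comparison is made on the sets `{|μ| ≤ n, |g(X)| ≤ n}`; these
increase to the whole space, and the lower integral over their union is the supremum.
-/

lemma one_sub_two_mul_add_sq_mul_div_le {a : ℝ} (ha : 0 < a) (b x : ℝ) :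
    1 - 2 * (b / a * b) + (b / a) ^ 2 * a ≤ 1 - 2 * (x * b) + x ^ 2 * a := by
  have h : 1 - 2 * (x * b) + x ^ 2 * a
      = 1 - 2 * (b / a * b) + (b / a) ^ 2 * a + a * (x - b / a) ^ 2 := by
    field_simp
    ring
  rw [h]
  exact le_add_of_nonneg_right (by positivity)

section

variable {Ω : Type*} {m mΩ : MeasurableSpace Ω} {P : Measure Ω} {s : Set Ω} {T φ f : Ω → ℝ}
  {C : ℝ}

lemma MeasureTheory.IntegrableOn.mul_of_abs_le (hf : IntegrableOn f s P) (hs : MeasurableSet s)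
    (hφ : AEStronglyMeasurable φ (P.restrict s)) (hφ_bdd : ∀ ω ∈ s, |φ ω| ≤ C) :
    IntegrableOn (fun ω => φ ω * f ω) s P :=
  Integrable.bdd_mul hf hφ (ae_restrict_of_forall_mem hs hφ_bdd)

lemma setIntegral_one_sub_two_mul_add [IsFiniteMeasure P] {u v : Ω → ℝ}
    (hu : IntegrableOn u s P) (hv : IntegrableOn v s P) :
    ∫ ω in s, (1 - 2 * u ω + v ω) ∂P = P.real s - 2 * ∫ ω in s, u ω ∂P + ∫ ω in s, v ω ∂P := by
  rw [integral_add (f := fun ω => 1 - 2 * u ω) ((integrable_const 1).sub (hu.const_mul 2)) hv,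
    integral_sub (integrable_const 1) (hu.const_mul 2), integral_const_mul]
  simp

lemma setIntegral_mul_condExp_of_abs_le (hm : m ≤ mΩ) [SigmaFinite (P.trim hm)]
    (hs : MeasurableSet[m] s) (hφ : StronglyMeasurable[m] φ) (hφ_bdd : ∀ ω ∈ s, |φ ω| ≤ C)
    (hf : Integrable f P) :
    ∫ ω in s, φ ω * P[f|m] ω ∂P = ∫ ω in s, φ ω * f ω ∂P := by
  set ψ := s.indicator φ
  have hψ : StronglyMeasurable[m] ψ := hφ.indicator hs
  have hψ_bdd : ∀ ω, ‖ψ ω‖ ≤ max C 0 := fun ω => by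
    by_cases hω : ω ∈ s
    · simpa [ψ, hω] using Or.inl (hφ_bdd ω hω)
    · simp [ψ, hω]
  have hψf : Integrable (ψ * f) P :=
    hf.bdd_mul (hψ.mono hm).aestronglyMeasurable (ae_of_all _ hψ_bdd)
  have hψ_eq : ∀ ω ∈ s, ψ ω = φ ω := fun ω hω => Set.indicator_of_mem hω φ
  calc ∫ ω in s, φ ω * P[f|m] ω ∂P = ∫ ω in s, (ψ * P[f|m]) ω ∂P :=
        setIntegral_congr_fun (hm s hs) fun ω hω => by simp [hψ_eq ω hω]
    _ = ∫ ω in s, P[ψ * f|m] ω ∂P :=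
        setIntegral_congr_ae (hm s hs) <|
          (condExp_mul_of_stronglyMeasurable_left hψ hψf hf).mono fun ω h _ => h.symm
    _ = ∫ ω in s, (ψ * f) ω ∂P := setIntegral_condExp hm hψf hs
    _ = ∫ ω in s, φ ω * f ω ∂P :=
        setIntegral_congr_fun (hm s hs) fun ω hω => by simp [hψ_eq ω hω]

/-- `E[((T - φ) / T)² | m]` for an `m`-measurable predictor `φ`. -/
noncomputable def condRelRisk (P : Measure Ω) (m : MeasurableSpace Ω) (T φ : Ω → ℝ) : Ω → ℝ :=
  fun ω => 1 - 2 * (φ ω * P[fun ω' => (T ω')⁻¹|m] ω) + φ ω ^ 2 * P[fun ω' => (T ω' ^ 2)⁻¹|m] ω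

lemma relRisk_ae_eq (hTpos : ∀ᵐ ω ∂P, 0 < T ω) (φ : Ω → ℝ) :
    (fun ω => ((T ω - φ ω) / T ω) ^ 2)
      =ᵐ[P] fun ω => 1 - 2 * (φ ω * (T ω)⁻¹) + φ ω ^ 2 * (T ω ^ 2)⁻¹ := by
  filter_upwards [hTpos] with ω hω
  field_simp
  ring

lemma integrableOn_condRelRisk [IsFiniteMeasure P] (hs : MeasurableSet s)
    (hφ : AEStronglyMeasurable φ (P.restrict s)) (hφ_bdd : ∀ ω ∈ s, |φ ω| ≤ C) :
    IntegrableOn (condRelRisk P m T φ) s P := by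
  have hφ2_bdd : ∀ ω ∈ s, |φ ω ^ 2| ≤ C ^ 2 := fun ω hω =>
    (abs_pow (φ ω) 2).trans_le (pow_le_pow_left₀ (abs_nonneg _) (hφ_bdd ω hω) 2)
  exact ((integrable_const 1).sub
    (((integrable_condExp.integrableOn (s := s)).mul_of_abs_le hs hφ hφ_bdd).const_mul 2)).add
    ((integrable_condExp.integrableOn (s := s)).mul_of_abs_le hs (hφ.pow 2) hφ2_bdd)

lemma setLIntegral_relRisk_eq (hm : m ≤ mΩ) [IsFiniteMeasure P] (hTpos : ∀ᵐ ω ∂P, 0 < T ω)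
    (hInt1 : Integrable (fun ω => (T ω)⁻¹) P) (hInt2 : Integrable (fun ω => (T ω ^ 2)⁻¹) P)
    (hs : MeasurableSet[m] s) (hφ : StronglyMeasurable[m] φ) (hφ_bdd : ∀ ω ∈ s, |φ ω| ≤ C) :
    ∫⁻ ω in s, ENNReal.ofReal (((T ω - φ ω) / T ω) ^ 2) ∂P
      = ENNReal.ofReal (∫ ω in s, condRelRisk P m T φ ω ∂P) := by
  unfold condRelRisk
  have hs' : MeasurableSet s := hm s hs
  have hφ' : AEStronglyMeasurable φ (P.restrict s) := (hφ.mono hm).aestronglyMeasurable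
  have hφ2 : StronglyMeasurable[m] (fun ω => φ ω ^ 2) := hφ.pow 2
  have hφ2_bdd : ∀ ω ∈ s, |φ ω ^ 2| ≤ C ^ 2 := fun ω hω =>
    (abs_pow (φ ω) 2).trans_le (pow_le_pow_left₀ (abs_nonneg _) (hφ_bdd ω hω) 2)
  have hφ2' : AEStronglyMeasurable (fun ω => φ ω ^ 2) (P.restrict s) :=
    (hφ2.mono hm).aestronglyMeasurable
  have hφU := (hInt1.integrableOn (s := s)).mul_of_abs_le hs' hφ' hφ_bdd
  have hφ2V := (hInt2.integrableOn (s := s)).mul_of_abs_le hs' hφ2' hφ2_bdd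
  have hrisk : IntegrableOn (fun ω => ((T ω - φ ω) / T ω) ^ 2) s P :=
    (((integrable_const 1).sub (hφU.const_mul 2)).add hφ2V).congr
      ((relRisk_ae_eq hTpos φ).filter_mono ae_restrict_le).symm
  rw [← ofReal_integral_eq_lintegral_ofReal hrisk (ae_of_all _ fun ω => sq_nonneg _),
    setIntegral_congr_ae hs' ((relRisk_ae_eq hTpos φ).mono fun ω h _ => h),
    setIntegral_one_sub_two_mul_add hφU hφ2V,
    setIntegral_one_sub_two_mul_add
      ((integrable_condExp.integrableOn (s := s)).mul_of_abs_le hs' hφ' hφ_bdd)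
      ((integrable_condExp.integrableOn (s := s)).mul_of_abs_le hs' hφ2' hφ2_bdd),
    setIntegral_mul_condExp_of_abs_le hm hs hφ hφ_bdd hInt1,
    setIntegral_mul_condExp_of_abs_le hm hs hφ2 hφ2_bdd hInt2]

lemma setLIntegral_relRisk_le (hm : m ≤ mΩ) [IsFiniteMeasure P] {μ h : Ω → ℝ}
    (hTpos : ∀ᵐ ω ∂P, 0 < T ω)
    (hInt1 : Integrable (fun ω => (T ω)⁻¹) P) (hInt2 : Integrable (fun ω => (T ω ^ 2)⁻¹) P)
    (hpos2 : ∀ᵐ ω ∂P, 0 < P[fun ω' => (T ω' ^ 2)⁻¹|m] ω)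
    (hμ : ∀ ω, μ ω = P[fun ω' => (T ω')⁻¹|m] ω / P[fun ω' => (T ω' ^ 2)⁻¹|m] ω)
    (hs : MeasurableSet[m] s) (hμm : StronglyMeasurable[m] μ) (hh : StronglyMeasurable[m] h)
    (hμ_bdd : ∀ ω ∈ s, |μ ω| ≤ C) (hh_bdd : ∀ ω ∈ s, |h ω| ≤ C) :
    ∫⁻ ω in s, ENNReal.ofReal (((T ω - μ ω) / T ω) ^ 2) ∂P
      ≤ ∫⁻ ω in s, ENNReal.ofReal (((T ω - h ω) / T ω) ^ 2) ∂P := by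
  rw [setLIntegral_relRisk_eq hm hTpos hInt1 hInt2 hs hμm hμ_bdd,
    setLIntegral_relRisk_eq hm hTpos hInt1 hInt2 hs hh hh_bdd]
  refine ENNReal.ofReal_le_ofReal (setIntegral_mono_ae
    (integrableOn_condRelRisk (hm s hs) (hμm.mono hm).aestronglyMeasurable hμ_bdd)
    (integrableOn_condRelRisk (hm s hs) (hh.mono hm).aestronglyMeasurable hh_bdd) ?_)
  filter_upwards [hpos2] with ω hω
  rw [condRelRisk, condRelRisk, hμ ω]
  exact one_sub_two_mul_add_sq_mul_div_le hω _ _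

end

theorem lintegral_relRisk_le {Ω : Type*} {m mΩ : MeasurableSpace Ω} (hm : m ≤ mΩ)
    {P : Measure Ω} [IsFiniteMeasure P] {T μ h : Ω → ℝ} (hTpos : ∀ᵐ ω ∂P, 0 < T ω)
    (hInt1 : Integrable (fun ω => (T ω)⁻¹) P) (hInt2 : Integrable (fun ω => (T ω ^ 2)⁻¹) P)
    (hpos2 : ∀ᵐ ω ∂P, 0 < P[fun ω' => (T ω' ^ 2)⁻¹|m] ω)
    (hμ : ∀ ω, μ ω = P[fun ω' => (T ω')⁻¹|m] ω / P[fun ω' => (T ω' ^ 2)⁻¹|m] ω)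
    (hh : StronglyMeasurable[m] h) :
    ∫⁻ ω, ENNReal.ofReal (((T ω - μ ω) / T ω) ^ 2) ∂P
      ≤ ∫⁻ ω, ENNReal.ofReal (((T ω - h ω) / T ω) ^ 2) ∂P := by
  have hμm : StronglyMeasurable[m] μ := by
    rw [funext hμ]
    exact (stronglyMeasurable_condExp.measurable.div
      stronglyMeasurable_condExp.measurable).stronglyMeasurable
  set S : ℕ → Set Ω := fun n => {ω | |μ ω| ≤ n ∧ |h ω| ≤ n}
  have hS : ∀ n, MeasurableSet[m] (S n) := fun n =>
    (measurable_abs.comp hμm.measurable measurableSet_Iic).inter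
      (measurable_abs.comp hh.measurable measurableSet_Iic)
  have hS_mono : Monotone S := fun k n hkn ω ⟨hμω, hhω⟩ =>
    ⟨hμω.trans (Nat.cast_le.mpr hkn), hhω.trans (Nat.cast_le.mpr hkn)⟩
  have hS_univ : ⋃ n, S n = Set.univ := Set.eq_univ_of_forall fun ω => by
    obtain ⟨n, hn⟩ := exists_nat_ge (max |μ ω| |h ω|)
    exact Set.mem_iUnion.mpr ⟨n, max_le_iff.mp hn⟩
  have h_iSup (F : Ω → ENNReal) : ∫⁻ ω, F ω ∂P = ⨆ n, ∫⁻ ω in S n, F ω ∂P := by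
    rw [← setLIntegral_iUnion_of_directed _ hS_mono.directed_le, hS_univ, setLIntegral_univ]
  rw [h_iSup, h_iSup]
  exact iSup_mono fun n => setLIntegral_relRisk_le hm hTpos hInt1 hInt2 hpos2 hμ (hS n) hμm hh
    (fun ω hω => hω.1) (fun ω hω => hω.2)

theorem stmt_2_general {Ω : Type*} [MeasurableSpace Ω] (P : Measure Ω)
    [IsProbabilityMeasure P]
    (T X : Ω → ℝ) (hX : Measurable X)
    (hTpos : ∀ᵐ ω ∂P, 0 < T ω)
    (hInt1 : Integrable (fun ω => (T ω)⁻¹) P)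
    (hInt2 : Integrable (fun ω => ((T ω) ^ 2)⁻¹) P)
    (hpos2 : ∀ᵐ ω ∂P,
      0 < (P[fun ω' => ((T ω') ^ 2)⁻¹
          | MeasurableSpace.comap X (inferInstance : MeasurableSpace ℝ)]) ω)
    (μ : Ω → ℝ)
    (hμ : ∀ ω, μ ω =
      (P[fun ω' => (T ω')⁻¹
          | MeasurableSpace.comap X (inferInstance : MeasurableSpace ℝ)]) ω /
      (P[fun ω' => ((T ω') ^ 2)⁻¹
          | MeasurableSpace.comap X (inferInstance : MeasurableSpace ℝ)]) ω) :
    ∀ g : ℝ → ℝ, Measurable g →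
      ∫⁻ ω, ENNReal.ofReal (((T ω - μ ω) / T ω) ^ 2) ∂P ≤
        ∫⁻ ω, ENNReal.ofReal (((T ω - g (X ω)) / T ω) ^ 2) ∂P := by
  intro g hg
  exact lintegral_relRisk_le hX.comap_le hTpos hInt1 hInt2 hpos2 hμ
    (hg.comp (comap_measurable X)).stronglyMeasurable

/-- the relative-error risk `E[((T − g(X))/T)²]` is minimized over
measurable predictors `g(X)` by `μ(X) = E[T⁻¹|X] / E[T⁻²|X]`. -/
theorem stmt_2 {Ω : Type*} [MeasurableSpace Ω] (P : Measure Ω)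
    [IsProbabilityMeasure P]
    (T X : Ω → ℝ) (hT : Measurable T) (hX : Measurable X)
    (hTpos : ∀ᵐ ω ∂P, 0 < T ω)
    (hInt1 : Integrable (fun ω => (T ω)⁻¹) P)
    (hInt2 : Integrable (fun ω => ((T ω) ^ 2)⁻¹) P)
    (hpos2 : ∀ᵐ ω ∂P,
      0 < (P[fun ω' => ((T ω') ^ 2)⁻¹
          | MeasurableSpace.comap X (inferInstance : MeasurableSpace ℝ)]) ω)
    (μ : Ω → ℝ)
    (hμ : ∀ ω, μ ω =
      (P[fun ω' => (T ω')⁻¹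
          | MeasurableSpace.comap X (inferInstance : MeasurableSpace ℝ)]) ω /
      (P[fun ω' => ((T ω') ^ 2)⁻¹
          | MeasurableSpace.comap X (inferInstance : MeasurableSpace ℝ)]) ω) :
    ∀ g : ℝ → ℝ, Measurable g →
      ∫⁻ ω, ENNReal.ofReal (((T ω - μ ω) / T ω) ^ 2) ∂P ≤
        ∫⁻ ω, ENNReal.ofReal (((T ω - g (X ω)) / T ω) ^ 2) ∂P :=
  stmt_2_general P T X hX hTpos hInt1 hInt2 hpos2 μ hμ
end

section
/- Let X₁, ..., Xₙ be i.i.d. with bounded density, Zᵢ ∈ [0, B] a.s. i.i.d. (and Zᵢ measurable with respect to the i-th observation), K a bounded nonnegative kernel supported in [−1,1], γ ∈ {0,1,2}, and S̃(x) = (nh)^{-1} Σᵢ Zᵢ(Xᵢ−x)^γ K((Xᵢ−x)/h). Then there exists ε₀ > 0 such that for each fixed x, P(|S̃(x) − E[S̃(x)]| > ε₀ √(log n/(n h))) ≤ 2 n^{−3/2} for all n large enough, provided nh/log n → ∞. -/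
/-!
Each summand `Yᵢ = Zᵢ (Xᵢ - x)^γ K((Xᵢ - x)/h)` is bounded by `b = B · sup K` and vanishes unless
`|Xᵢ - x| ≤ h`, so the bounded density gives `E Yᵢ² ≤ 2 M b² h =: C h`. Bernstein's inequality
(Chernoff's bound together with `mgf W t ≤ exp (t² E W²)` for `|W| ≤ c` centered and
`0 ≤ t ≤ 1/c`) applies to the centered sum, whose variance proxy is `n C h`. At the threshold
`T = nh · ε₀ √(log n/(nh))` with `ε₀² = 6C` one has `T² = 4 (n C h) (3/2 log n)`, and
`T ≥ 6 b log n` as soon as `nh / log n ≥ 6 b²/C`; so each tail is at most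
`exp (-(3/2) log n) = n^(-3/2)`.
-/

open MeasureTheory ProbabilityTheory Filter Real

lemma exists_nonneg_mul_le_one_and_le_mul_sub_sq_mul {c v T L : ℝ} (hc : 0 < c) (hL : 0 ≤ L)
    (hTc : 2 * c * L ≤ T) (hTv : 4 * v * L ≤ T ^ 2) :
    ∃ t, 0 ≤ t ∧ t * c ≤ 1 ∧ L ≤ t * T - t ^ 2 * v := by
  have hT : 0 ≤ T := le_trans (by positivity) hTc
  -- the unconstrained optimum `t = T/(2v)` if it is admissible, otherwise `t = 1/c`
  rcases le_or_gt (2 * v) (T * c) with hlarge | hsmall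
  · refine ⟨1 / c, by positivity, by field_simp; rfl, ?_⟩
    rw [show 1 / c * T - (1 / c) ^ 2 * v = (T * c - v) / c ^ 2 by field_simp,
      le_div_iff₀ (by positivity)]
    nlinarith
  · have hv : 0 < v := by nlinarith
    refine ⟨T / (2 * v), by positivity, ?_, ?_⟩
    · rw [div_mul_eq_mul_div, div_le_one (by positivity)]
      linarith
    · rw [show T / (2 * v) * T - (T / (2 * v)) ^ 2 * v = T ^ 2 / (4 * v) by field_simp; ring,
        le_div_iff₀ (by positivity)]
      linarith

lemma exp_le_one_add_add_sq {u : ℝ} (hu : |u| ≤ 1) : exp u ≤ 1 + u + u ^ 2 := by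
  linarith [(abs_le.mp (abs_exp_sub_one_sub_id_le hu)).2]

lemma sq_mul_sqrt_mul_sqrt_div {a ℓ m : ℝ} (ha : 0 ≤ a) (hℓ : 0 ≤ ℓ) (hm : 0 < m) :
    (m * (√a * √(ℓ / m))) ^ 2 = a * ℓ * m := by
  rw [mul_pow, mul_pow, sq_sqrt ha, sq_sqrt (div_nonneg hℓ hm.le)]
  field_simp

section Bernstein

variable {Ω : Type*} [MeasurableSpace Ω] {P : Measure Ω} [IsProbabilityMeasure P]

lemma integrable_exp_mul_of_abs_le {W : Ω → ℝ} (hW : Measurable W) {c : ℝ}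
    (hbound : ∀ᵐ ω ∂P, |W ω| ≤ c) (t : ℝ) :
    Integrable (fun ω => exp (t * W ω)) P := by
  refine .of_bound (by fun_prop) (exp (|t| * c)) ?_
  filter_upwards [hbound] with ω hω
  rw [norm_of_nonneg (exp_pos _).le, exp_le_exp]
  calc t * W ω ≤ |t| * |W ω| := by rw [← abs_mul]; exact le_abs_self _
    _ ≤ |t| * c := by gcongr

lemma mgf_le_exp_sq_mul_integral_sq {W : Ω → ℝ} (hW : Measurable W) {c t : ℝ}
    (hbound : ∀ᵐ ω ∂P, |W ω| ≤ c) (hmean : P[W] = 0) (ht : 0 ≤ t) (htc : t * c ≤ 1) :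
    mgf W P t ≤ exp (t ^ 2 * P[W ^ 2]) := by
  have hWint : Integrable W P := .of_bound hW.aestronglyMeasurable c hbound
  have hW2int : Integrable (fun ω => W ω ^ 2) P := by
    refine .of_bound (by fun_prop) (c ^ 2) ?_
    filter_upwards [hbound] with ω hω
    simpa [abs_pow] using pow_le_pow_left₀ (abs_nonneg _) hω 2
  have hquad : ∀ᵐ ω ∂P, exp (t * W ω) ≤ 1 + t * W ω + t ^ 2 * W ω ^ 2 := by
    filter_upwards [hbound] with ω hω
    have htW : |t * W ω| ≤ 1 := by
      rw [abs_mul, abs_of_nonneg ht]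
      exact (mul_le_mul_of_nonneg_left hω ht).trans htc
    linarith [exp_le_one_add_add_sq htW, mul_pow t (W ω) 2]
  have hlin : Integrable (fun ω => 1 + t * W ω) P := (integrable_const 1).add (hWint.const_mul t)
  calc mgf W P t ≤ ∫ ω, (1 + t * W ω + t ^ 2 * W ω ^ 2) ∂P :=
        integral_mono_of_nonneg (.of_forall fun _ => (exp_pos _).le)
          (hlin.add (hW2int.const_mul (t ^ 2))) hquad
    _ = 1 + t ^ 2 * ∫ ω, W ω ^ 2 ∂P := by
        rw [integral_add hlin (hW2int.const_mul _),
          integral_add (integrable_const 1) (hWint.const_mul t), integral_const_mul,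
          integral_const_mul, hmean]
        simp
    _ ≤ exp (t ^ 2 * ∫ ω, W ω ^ 2 ∂P) := by linarith [add_one_le_exp (t ^ 2 * ∫ ω, W ω ^ 2 ∂P)]

variable {ι : Type*} {W : ι → Ω → ℝ} {c v t T : ℝ}

lemma measureReal_le_sum_le_exp_of_abs_le (hW : ∀ i, Measurable (W i)) (hindep : iIndepFun W P)
    (hbound : ∀ i, ∀ᵐ ω ∂P, |W i ω| ≤ c) (hmean : ∀ i, P[W i] = 0)
    (hvar : ∀ i, P[W i ^ 2] ≤ v) (ht : 0 ≤ t) (htc : t * c ≤ 1) (s : Finset ι) :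
    P.real {ω | T ≤ ∑ i ∈ s, W i ω} ≤ exp (-(t * T) + s.card * (t ^ 2 * v)) := by
  have hint := hindep.integrable_exp_mul_sum hW
    (fun i _ => integrable_exp_mul_of_abs_le (hW i) (hbound i) t) (s := s)
  calc P.real {ω | T ≤ ∑ i ∈ s, W i ω}
      ≤ exp (-t * T) * mgf (∑ i ∈ s, W i) P t := by
        simpa only [Finset.sum_apply] using measure_ge_le_exp_mul_mgf T ht hint
    _ = exp (-t * T) * ∏ i ∈ s, mgf (W i) P t := by rw [hindep.mgf_sum hW]
    _ ≤ exp (-t * T) * ∏ _i ∈ s, exp (t ^ 2 * v) := by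
        gcongr with i
        · exact fun i _ => mgf_nonneg
        · exact (mgf_le_exp_sq_mul_integral_sq (hW i) (hbound i) (hmean i) ht htc).trans
            (exp_le_exp.mpr (by gcongr; exact hvar i))
    _ = exp (-(t * T) + s.card * (t ^ 2 * v)) := by
        rw [Finset.prod_const, ← exp_nat_mul, ← exp_add, neg_mul]

lemma measureReal_lt_abs_sum_le_two_mul_exp_of_abs_le (hW : ∀ i, Measurable (W i))
    (hindep : iIndepFun W P) (hbound : ∀ i, ∀ᵐ ω ∂P, |W i ω| ≤ c) (hmean : ∀ i, P[W i] = 0)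
    (hvar : ∀ i, P[W i ^ 2] ≤ v) (ht : 0 ≤ t) (htc : t * c ≤ 1) (s : Finset ι) :
    P.real {ω | T < |∑ i ∈ s, W i ω|} ≤ 2 * exp (-(t * T) + s.card * (t ^ 2 * v)) := by
  have hupper := measureReal_le_sum_le_exp_of_abs_le (T := T) hW hindep hbound hmean hvar ht htc s
  have hlower := measureReal_le_sum_le_exp_of_abs_le (T := T) (W := fun i ω => -W i ω)
    (fun i => (hW i).neg) (hindep.comp (fun _ => Neg.neg) fun _ => measurable_neg)
    (by simpa only [abs_neg] using hbound) (fun i => by simp [integral_neg, hmean i])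
    (fun i => by simpa [neg_sq] using hvar i) ht htc s
  calc P.real {ω | T < |∑ i ∈ s, W i ω|}
      ≤ P.real ({ω | T ≤ ∑ i ∈ s, W i ω} ∪ {ω | T ≤ ∑ i ∈ s, -W i ω}) := by
        refine measureReal_mono fun ω (hω : T < |_|) => ?_
        rcases lt_abs.mp hω with h | h
        · exact Or.inl h.le
        · exact Or.inr (by simpa [Finset.sum_neg_distrib] using h.le)
    _ ≤ _ := (measureReal_union_le _ _).trans (by linarith)

/-- **Bernstein's inequality**. -/
theorem measureReal_lt_abs_sum_le_two_mul_exp_neg {L : ℝ} (hW : ∀ i, Measurable (W i))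
    (hindep : iIndepFun W P) (hbound : ∀ i, ∀ᵐ ω ∂P, |W i ω| ≤ c) (hmean : ∀ i, P[W i] = 0)
    (hvar : ∀ i, P[W i ^ 2] ≤ v) (s : Finset ι) (hc : 0 < c) (hL : 0 ≤ L)
    (hTc : 2 * c * L ≤ T) (hTv : 4 * (s.card * v) * L ≤ T ^ 2) :
    P.real {ω | T < |∑ i ∈ s, W i ω|} ≤ 2 * exp (-L) := by
  obtain ⟨t, ht, htc, hL⟩ := exists_nonneg_mul_le_one_and_le_mul_sub_sq_mul hc hL hTc hTv
  refine (measureReal_lt_abs_sum_le_two_mul_exp_of_abs_le hW hindep hbound hmean hvar ht htc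
    s).trans ?_
  gcongr
  linarith

theorem measureReal_lt_abs_sum_sub_le_two_mul_exp_neg {Y : ℕ → Ω → ℝ}
    (hY : ∀ i, Measurable (Y i)) (hindep : iIndepFun Y P)
    (hident : ∀ i, IdentDistrib (Y i) (Y 0) P P) {b L : ℝ} (hbound : ∀ i, ∀ᵐ ω ∂P, |Y i ω| ≤ b)
    (n : ℕ) (hb : 0 < b) (hL : 0 ≤ L) (hTb : 4 * b * L ≤ T)
    (hTv : 4 * (n * P[Y 0 ^ 2]) * L ≤ T ^ 2) :
    P.real {ω | T < |∑ i ∈ Finset.range n, Y i ω - n * P[Y 0]|} ≤ 2 * exp (-L) := by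
  set m := P[Y 0]
  have hmean : ∀ i, P[Y i] = m := fun i => (hident i).integral_eq
  have hint : ∀ i, Integrable (Y i) P := fun i =>
    .of_bound (hY i).aestronglyMeasurable b (by simpa only [Real.norm_eq_abs] using hbound i)
  have hm : |m| ≤ b := by
    simpa using norm_integral_le_of_norm_le_const (μ := P) (f := Y 0)
      (by simpa only [Real.norm_eq_abs] using hbound 0)
  have hbound' : ∀ i, ∀ᵐ ω ∂P, |Y i ω - m| ≤ 2 * b := fun i => by
    filter_upwards [hbound i] with ω hω
    linarith [abs_sub (Y i ω) m]
  have hvar : ∀ i, P[fun ω => (Y i ω - m) ^ 2] ≤ P[Y 0 ^ 2] := fun i => by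
    rw [← hmean i, ← variance_eq_integral (hY i).aemeasurable, (hident i).variance_eq]
    exact variance_le_expectation_sq (hY 0).aestronglyMeasurable
  have hsum : ∀ ω, ∑ i ∈ Finset.range n, (Y i ω - m) =
      ∑ i ∈ Finset.range n, Y i ω - n * m := by
    simp [Finset.sum_sub_distrib]
  simpa only [hsum, Finset.card_range] using
    measureReal_lt_abs_sum_le_two_mul_exp_neg (W := fun i ω => Y i ω - m)
      (fun i => (hY i).sub_const m)
      (hindep.comp (fun _ => (· - m)) fun _ => measurable_id.sub_const m) hbound'
      (fun i => by simp [integral_sub (hint i) (integrable_const m), hmean i]) hvar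
      (Finset.range n) (by positivity) hL (by linarith) (by rwa [Finset.card_range])

end Bernstein

section Kernel

noncomputable def kernelTerm (K : ℝ → ℝ) (γ : ℕ) (x h : ℝ) (p : ℝ × ℝ) : ℝ :=
  p.2 * (p.1 - x) ^ γ * K ((p.1 - x) / h)

variable {K : ℝ → ℝ} {γ : ℕ} {x h : ℝ}

lemma measurable_kernelTerm (hK : Measurable K) : Measurable (kernelTerm K γ x h) := by
  unfold kernelTerm
  fun_prop

lemma abs_sub_le_of_kernel_ne_zero (hKsupp : ∀ v, K v ≠ 0 → v ∈ Set.Icc (-1 : ℝ) 1)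
    (hh : 0 < h) {u : ℝ} (hu : K ((u - x) / h) ≠ 0) : |u - x| ≤ h := by
  have := abs_le.mpr (hKsupp _ hu)
  rwa [abs_div, abs_of_pos hh, div_le_one hh] at this

lemma kernelTerm_eq_zero_of_notMem (hKsupp : ∀ v, K v ≠ 0 → v ∈ Set.Icc (-1 : ℝ) 1)
    (hh : 0 < h) {p : ℝ × ℝ} (hp : p.1 ∉ Set.Icc (x - h) (x + h)) :
    kernelTerm K γ x h p = 0 := by
  by_contra hne
  have hK : K ((p.1 - x) / h) ≠ 0 := right_ne_zero_of_mul hne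
  exact hp (Set.mem_Icc_iff_abs_le.mp
    (abs_sub_comm p.1 x ▸ abs_sub_le_of_kernel_ne_zero hKsupp hh hK))

lemma abs_kernelTerm_le (hKsupp : ∀ v, K v ≠ 0 → v ∈ Set.Icc (-1 : ℝ) 1) {κ B : ℝ}
    (hK0 : ∀ v, 0 ≤ K v) (hKle : ∀ v, K v ≤ κ) (hh : 0 < h) (hh1 : h ≤ 1) {p : ℝ × ℝ}
    (hp : 0 ≤ p.2 ∧ p.2 ≤ B) : |kernelTerm K γ x h p| ≤ B * κ := by
  by_cases hK : K ((p.1 - x) / h) = 0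
  · simp only [kernelTerm, hK, mul_zero, abs_zero]
    exact mul_nonneg (hp.1.trans hp.2) ((hK0 0).trans (hKle 0))
  have hpow : |(p.1 - x) ^ γ| ≤ 1 := abs_pow (p.1 - x) γ ▸
    pow_le_one₀ (abs_nonneg _) ((abs_sub_le_of_kernel_ne_zero hKsupp hh hK).trans hh1)
  have hB : 0 ≤ B := hp.1.trans hp.2
  rw [kernelTerm, abs_mul, abs_mul, abs_of_nonneg hp.1, abs_of_nonneg (hK0 _)]
  calc p.2 * |(p.1 - x) ^ γ| * K ((p.1 - x) / h) ≤ B * 1 * κ :=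
        mul_le_mul (mul_le_mul hp.2 hpow (abs_nonneg _) hB) (hKle _) (hK0 _) (by positivity)
    _ = B * κ := by ring

end Kernel

section Moments

variable {Ω : Type*} [MeasurableSpace Ω] {P : Measure Ω}

lemma integral_sq_le_mul_measureReal [IsFiniteMeasure P] {Y : Ω → ℝ} {A : Set Ω}
    (hA : MeasurableSet A) {b : ℝ} (hbound : ∀ᵐ ω ∂P, |Y ω| ≤ b) (hzero : ∀ ω ∉ A, Y ω = 0) :
    P[Y ^ 2] ≤ b ^ 2 * P.real A := by
  have hle : ∀ᵐ ω ∂P, Y ω ^ 2 ≤ A.indicator (fun _ => b ^ 2) ω := by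
    filter_upwards [hbound] with ω hω
    by_cases hωA : ω ∈ A
    · rw [Set.indicator_of_mem hωA, ← sq_abs]
      exact pow_le_pow_left₀ (abs_nonneg _) hω 2
    · rw [Set.indicator_of_notMem hωA, hzero ω hωA]
      simp
  calc ∫ ω, Y ω ^ 2 ∂P ≤ ∫ ω, A.indicator (fun _ => b ^ 2) ω ∂P :=
        integral_mono_of_nonneg (.of_forall fun ω => sq_nonneg (Y ω))
          ((integrable_const _).indicator hA) hle
    _ = b ^ 2 * P.real A := by rw [integral_indicator_const _ hA, smul_eq_mul, mul_comm]

lemma measureReal_preimage_le_of_density_le {X : Ω → ℝ} (hX : Measurable X) {f : ℝ → ℝ}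
    (hdens : P.map X = volume.withDensity fun u => ENNReal.ofReal (f u)) {M : ℝ} (hM0 : 0 ≤ M)
    (hM : ∀ u, f u ≤ M) {s : Set ℝ} (hs : MeasurableSet s) (hfin : volume s ≠ ⊤) :
    P.real (X ⁻¹' s) ≤ M * volume.real s := by
  rw [measureReal_def, ← Measure.map_apply hX hs, hdens, withDensity_apply _ hs]
  refine ENNReal.toReal_le_of_le_ofReal (by positivity) ?_
  calc ∫⁻ u in s, ENNReal.ofReal (f u) ≤ ∫⁻ _ in s, ENNReal.ofReal M :=
        lintegral_mono fun u => ENNReal.ofReal_le_ofReal (hM u)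
    _ = ENNReal.ofReal (M * volume.real s) := by
        rw [setLIntegral_const, ENNReal.ofReal_mul hM0, measureReal_def,
          ENNReal.ofReal_toReal hfin]

lemma integral_sum_range_of_identDistrib [IsFiniteMeasure P] {Y : ℕ → Ω → ℝ}
    (hident : ∀ i, IdentDistrib (Y i) (Y 0) P P) (hint : Integrable (Y 0) P) (n : ℕ) :
    ∫ ω, ∑ i ∈ Finset.range n, Y i ω ∂P = n * P[Y 0] := by
  rw [integral_finsetSum _ fun i _ => (hident i).integrable_iff.mpr hint]
  simp [fun i => (hident i).integral_eq]

lemma integral_kernelTerm_comp_sq_le [IsFiniteMeasure P] {V : Ω → ℝ × ℝ} (hV : Measurable V)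
    {f : ℝ → ℝ}
    (hdens : P.map (fun ω => (V ω).1) = volume.withDensity fun u => ENNReal.ofReal (f u))
    {M : ℝ} (hM0 : 0 ≤ M) (hM : ∀ u, f u ≤ M) {K : ℝ → ℝ}
    (hKsupp : ∀ v, K v ≠ 0 → v ∈ Set.Icc (-1 : ℝ) 1) {γ : ℕ} {x h b : ℝ} (hh : 0 < h)
    (hbound : ∀ᵐ ω ∂P, |kernelTerm K γ x h (V ω)| ≤ b) :
    P[(kernelTerm K γ x h ∘ V) ^ 2] ≤ 2 * M * b ^ 2 * h := by
  have hwindow : P.real ((fun ω => (V ω).1) ⁻¹' Set.Icc (x - h) (x + h)) ≤ M * (2 * h) := by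
    have := measureReal_preimage_le_of_density_le (s := Set.Icc (x - h) (x + h)) hV.fst hdens
      hM0 hM measurableSet_Icc measure_Icc_lt_top.ne
    rwa [Real.volume_real_Icc_of_le (by linarith), add_sub_sub_cancel, ← two_mul] at this
  calc P[(kernelTerm K γ x h ∘ V) ^ 2]
      ≤ b ^ 2 * P.real ((fun ω => (V ω).1) ⁻¹' Set.Icc (x - h) (x + h)) :=
        integral_sq_le_mul_measureReal (hV.fst measurableSet_Icc) hbound
          fun _ hω => kernelTerm_eq_zero_of_notMem hKsupp hh hω
    _ ≤ b ^ 2 * (M * (2 * h)) := by gcongr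
    _ = 2 * M * b ^ 2 * h := by ring

end Moments

theorem measureReal_lt_abs_inv_mul_sum_sub_le_rpow {Ω : Type*} [MeasurableSpace Ω]
    {P : Measure Ω} [IsProbabilityMeasure P] {Y : ℕ → Ω → ℝ}
    (hY : ∀ i, Measurable (Y i)) (hindep : iIndepFun Y P)
    (hident : ∀ i, IdentDistrib (Y i) (Y 0) P P) {b C h : ℝ} (hb : 0 < b) (hC : 0 < C)
    (hh : 0 < h) (hbound : ∀ i, ∀ᵐ ω ∂P, |Y i ω| ≤ b) (hsecond : P[Y 0 ^ 2] ≤ C * h) {n : ℕ}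
    (hn : 2 ≤ n) (hratio : 6 * b ^ 2 / C ≤ n * h / log n) :
    P.real {ω | √(6 * C) * √(log n / (n * h)) <
      |(n * h)⁻¹ * (∑ i ∈ Finset.range n, Y i ω - n * P[Y 0])|} ≤
      2 * (n : ℝ) ^ (-(3 : ℝ) / 2) := by
  have hlog : 0 < log n := log_pos (by exact_mod_cast hn)
  have hnh : 0 < (n : ℝ) * h := by positivity
  set T := n * h * (√(6 * C) * √(log n / (n * h)))
  have hT : T ^ 2 = 6 * C * log n * (n * h) :=
    sq_mul_sqrt_mul_sqrt_div (by positivity) hlog.le hnh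
  have hTb : 4 * b * (3 / 2 * log n) ≤ T := by
    refine le_of_pow_le_pow_left₀ two_ne_zero (by positivity) ?_
    have := (div_le_div_iff₀ hC hlog).mp hratio
    rw [hT]
    nlinarith
  have hTv : 4 * (n * P[Y 0 ^ 2]) * (3 / 2 * log n) ≤ T ^ 2 := by
    have : (n : ℝ) * P[Y 0 ^ 2] ≤ n * (C * h) := by gcongr
    rw [hT]
    nlinarith
  have hevent : ∀ ω, √(6 * C) * √(log n / (n * h)) <
      |(n * h)⁻¹ * (∑ i ∈ Finset.range n, Y i ω - n * P[Y 0])| ↔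
      T < |∑ i ∈ Finset.range n, Y i ω - n * P[Y 0]| := fun ω => by
    rw [abs_mul, abs_inv, abs_of_pos hnh, lt_inv_mul_iff₀ hnh]
  simp only [hevent]
  convert measureReal_lt_abs_sum_sub_le_two_mul_exp_neg hY hindep hident hbound n hb
    (by positivity) hTb hTv using 2
  rw [rpow_def_of_pos (by positivity)]
  ring_nf

theorem stmt_10_general {Ω : Type*} [MeasurableSpace Ω] (P : Measure Ω)
    [IsProbabilityMeasure P]
    (V : ℕ → Ω → ℝ × ℝ) (hmeas : ∀ i, Measurable (V i))
    (hindep : iIndepFun V P)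
    (hident : ∀ i, IdentDistrib (V i) (V 0) P P)
    (B : ℝ) (hZb : ∀ i, ∀ᵐ ω ∂P, 0 ≤ (V i ω).2 ∧ (V i ω).2 ≤ B)
    (f : ℝ → ℝ)
    (hfb : ∃ M, ∀ u, f u ≤ M)
    (hdens : P.map (fun ω => (V 0 ω).1) =
      volume.withDensity fun u => ENNReal.ofReal (f u))
    (K : ℝ → ℝ) (hKm : Measurable K) (hK0 : ∀ v, 0 ≤ K v)
    (hKb : ∃ B', ∀ v, K v ≤ B')
    (hKsupp : ∀ v, K v ≠ 0 → v ∈ Set.Icc (-1 : ℝ) 1)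
    (γ : ℕ)
    (h : ℕ → ℝ) (hh : ∀ n, 0 < h n ∧ h n < 1)
    (hrate : Tendsto (fun n : ℕ => (n : ℝ) * h n / Real.log n) atTop atTop)
    (S : ℕ → ℝ → Ω → ℝ)
    (hS : ∀ n x ω, S n x ω = ((n : ℝ) * h n)⁻¹ *
      ∑ i ∈ Finset.range n,
        (V i ω).2 * ((V i ω).1 - x) ^ γ * K (((V i ω).1 - x) / h n)) :
    ∃ ε₀ : ℝ, 0 < ε₀ ∧ ∀ x : ℝ, ∃ N : ℕ, ∀ n ≥ N,
      (P {ω | ε₀ * Real.sqrt (Real.log n / ((n : ℝ) * h n)) <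
          |S n x ω - ∫ ω', S n x ω' ∂P|}).toReal ≤
        2 * (n : ℝ) ^ (-(3 : ℝ) / 2) := by
  obtain ⟨M, hM⟩ := hfb
  obtain ⟨κ, hκ⟩ := hKb
  set b := max B 1 * max κ 1
  set C := 2 * max M 1 * b ^ 2
  refine ⟨√(6 * C), by positivity, fun x => ?_⟩
  obtain ⟨N, hN⟩ := eventually_atTop.mp
    ((hrate.eventually_ge_atTop (6 * b ^ 2 / C)).and (eventually_ge_atTop 2))
  refine ⟨N, fun n hn => ?_⟩
  obtain ⟨hh0, hh1⟩ := hh n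
  set Y : ℕ → Ω → ℝ := fun i => kernelTerm K γ x (h n) ∘ V i
  have hY : ∀ i, Measurable (Y i) := fun i => (measurable_kernelTerm hKm).comp (hmeas i)
  have hidentY : ∀ i, IdentDistrib (Y i) (Y 0) P P := fun i =>
    (hident i).comp (measurable_kernelTerm hKm)
  have hbound : ∀ i, ∀ᵐ ω ∂P, |Y i ω| ≤ b := fun i => by
    filter_upwards [hZb i] with ω hω
    exact abs_kernelTerm_le hKsupp hK0 (fun v => (hκ v).trans (le_max_left _ _)) hh0 hh1.le
      ⟨hω.1, hω.2.trans (le_max_left _ _)⟩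
  have hcentered : ∀ ω, S n x ω - ∫ ω', S n x ω' ∂P =
      ((n : ℝ) * h n)⁻¹ * (∑ i ∈ Finset.range n, Y i ω - n * P[Y 0]) := fun ω => by
    rw [show S n x = fun ω => ((n : ℝ) * h n)⁻¹ * ∑ i ∈ Finset.range n, Y i ω from
        funext (hS n x),
      integral_const_mul, integral_sum_range_of_identDistrib hidentY
        (.of_bound (hY 0).aestronglyMeasurable b (by simpa only [Real.norm_eq_abs] using hbound 0))]
    ring
  rw [← measureReal_def]
  simpa only [hcentered] using measureReal_lt_abs_inv_mul_sum_sub_le_rpow hY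
    (hindep.comp _ fun _ => measurable_kernelTerm hKm) hidentY (by positivity) (by positivity) hh0
    hbound (integral_kernelTerm_comp_sq_le (hmeas 0) hdens (by positivity)
      (fun u => (hM u).trans (le_max_left _ _)) hKsupp hh0 (hbound 0)) (hN n hn).2 (hN n hn).1

/-- pointwise concentration of the kernel-weighted empirical
average `S̃(x)`: for some `ε₀ > 0`,
`P(|S̃(x) − E S̃(x)| > ε₀ √(log n/(nh))) ≤ 2 n^{−3/2}` for all large `n`. -/
theorem stmt_10 {Ω : Type*} [MeasurableSpace Ω] (P : Measure Ω)
    [IsProbabilityMeasure P]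
    (V : ℕ → Ω → ℝ × ℝ) (hmeas : ∀ i, Measurable (V i))
    (hindep : iIndepFun V P)
    (hident : ∀ i, IdentDistrib (V i) (V 0) P P)
    (B : ℝ) (hZb : ∀ i, ∀ᵐ ω ∂P, 0 ≤ (V i ω).2 ∧ (V i ω).2 ≤ B)
    (f : ℝ → ℝ) (hfm : Measurable f) (hf0 : ∀ u, 0 ≤ f u)
    (hfb : ∃ M, ∀ u, f u ≤ M)
    (hdens : P.map (fun ω => (V 0 ω).1) =
      volume.withDensity fun u => ENNReal.ofReal (f u))
    (K : ℝ → ℝ) (hKm : Measurable K) (hK0 : ∀ v, 0 ≤ K v)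
    (hKb : ∃ B', ∀ v, K v ≤ B')
    (hKsupp : ∀ v, K v ≠ 0 → v ∈ Set.Icc (-1 : ℝ) 1)
    (γ : ℕ) (hγ : γ ≤ 2)
    (h : ℕ → ℝ) (hh : ∀ n, 0 < h n ∧ h n < 1)
    (hrate : Tendsto (fun n : ℕ => (n : ℝ) * h n / Real.log n) atTop atTop)
    (S : ℕ → ℝ → Ω → ℝ)
    (hS : ∀ n x ω, S n x ω = ((n : ℝ) * h n)⁻¹ *
      ∑ i ∈ Finset.range n,
        (V i ω).2 * ((V i ω).1 - x) ^ γ * K (((V i ω).1 - x) / h n)) :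
    ∃ ε₀ : ℝ, 0 < ε₀ ∧ ∀ x : ℝ, ∃ N : ℕ, ∀ n ≥ N,
      (P {ω | ε₀ * Real.sqrt (Real.log n / ((n : ℝ) * h n)) <
          |S n x ω - ∫ ω', S n x ω' ∂P|}).toReal ≤
        2 * (n : ℝ) ^ (-(3 : ℝ) / 2) :=
  stmt_10_general P V hmeas hindep hident B hZb f hfb hdens K hKm hK0 hKb hKsupp γ h hh hrate S hS
end
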